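/- arXiv:2010.02606 — 8 statements merged into one kernel-verified Lean document; each statement's English description precedes it below -/
import Mathlib

section
/- Let ω be a weight function, φ(x) = ω(e^x), φ* its Young conjugate. For all h, k, l > 0 there exist m, C > 0 such that (1/m)φ*(m(y + l)) + k·y ≤ (1/h)φ*(h·y) + log C for all y ≥ 0. -/
open Real Set Filter

/-- A weight function in the sense of Braun, Meise and Taylor. -/
def IsWeightFunction (ω : ℝ → ℝ) : Prop :=
  MonotoneOn ω (Set.Ici 0) ∧ ContinuousOn ω (Set.Ici 0) ∧ ω 0 = 0 ∧
  (∀ t ≥ (0:ℝ), 0 ≤ ω t) ∧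
  (∃ C > (0:ℝ), ∀ t ≥ (0:ℝ), ω (2 * t) ≤ C * ω t + C) ∧
  (∀ ε > (0:ℝ), ∃ T > (0:ℝ), ∀ t ≥ T, Real.log t ≤ ε * ω t) ∧
  ConvexOn ℝ (Set.Ici 0) (fun x => ω (Real.exp x))

/-- The Young conjugate `φ*(y) = sup_{x ≥ 0} (x y − φ(x))` of `φ(x) = ω(eˣ)`. -/
noncomputable def YoungConj (ω : ℝ → ℝ) (y : ℝ) : ℝ :=
  sSup ((fun x => x * y - ω (Real.exp x)) '' Set.Ici 0)


/-- Lemma 2.6(i) of Heinrich: for all `h, k, l > 0` there exist `m, C > 0` such that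
`(1/m) φ*(m(y+l)) + k y ≤ (1/h) φ*(h y) + log C` for all `y ≥ 0`. -/
theorem youngConj_estimate_beurling (ω : ℝ → ℝ) (hω : IsWeightFunction ω) :
    ∀ h k l : ℝ, 0 < h → 0 < k → 0 < l →
      ∃ m C : ℝ, 0 < m ∧ 0 < C ∧ ∀ y ≥ (0:ℝ),
        (1 / m) * YoungConj ω (m * (y + l)) + k * y ≤
          (1 / h) * YoungConj ω (h * y) + Real.log C := by
  obtain ⟨hmono, hcont, hzero, hnonneg, ⟨C₀, hC₀pos, hC₀⟩, hlog, hconv⟩ := hω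
  intro h k l hh hk hl
  -- sublinearity: for every c ≥ 0 there is B ≥ 0 with c * x ≤ ω(eˣ) + B for x ≥ 0
  have hsub : ∀ c ≥ (0:ℝ), ∃ B ≥ (0:ℝ), ∀ x ≥ (0:ℝ), c * x ≤ ω (Real.exp x) + B := by
    intro c hc
    obtain ⟨T, hT, hTle⟩ := hlog (1 / (c + 1)) (by positivity)
    refine ⟨c * max (Real.log T) 0, by positivity, fun x hx => ?_⟩
    have hφ : 0 ≤ ω (Real.exp x) := hnonneg _ (Real.exp_pos x).le
    by_cases hxT : Real.log T ≤ x
    · have h1 : Real.log (Real.exp x) ≤ (1 / (c + 1)) * ω (Real.exp x) := by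
        apply hTle
        calc T = Real.exp (Real.log T) := (Real.exp_log hT).symm
        _ ≤ Real.exp x := Real.exp_le_exp.mpr hxT
      rw [Real.log_exp] at h1
      have h2 : (c + 1) * x ≤ ω (Real.exp x) := by
        have h3 := mul_le_mul_of_nonneg_left h1 (by positivity : (0:ℝ) ≤ c + 1)
        rwa [show (c+1) * ((1/(c+1)) * ω (Real.exp x)) = ω (Real.exp x) by
          field_simp] at h3
      nlinarith [mul_nonneg hc (le_max_right (Real.log T) 0), hx]
    · have h1 : x ≤ max (Real.log T) 0 := le_max_of_le_left (by linarith)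
      have h2 := mul_le_mul_of_nonneg_left h1 hc
      linarith
  -- iterated doubling
  have hdbl : ∀ n : ℕ, ∃ A ≥ (1:ℝ), ∀ x ≥ (0:ℝ),
      ω (Real.exp (x + n * Real.log 2)) ≤ A * ω (Real.exp x) + A := by
    intro n
    induction n with
    | zero =>
      refine ⟨1, le_refl 1, fun x hx => ?_⟩
      simp only [Nat.cast_zero, zero_mul, add_zero, one_mul]
      linarith [hnonneg (Real.exp x) (Real.exp_pos x).le]
    | succ n ih =>
      obtain ⟨A, hA1, hA⟩ := ih
      refine ⟨C₀ * A + C₀ + 1, by nlinarith, fun x hx => ?_⟩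
      have e : Real.exp (x + ((n:ℕ)+1 : ℕ) * Real.log 2)
          = 2 * Real.exp (x + n * Real.log 2) := by
        rw [show (x + (((n:ℕ)+1 : ℕ):ℝ) * Real.log 2)
            = (x + (n:ℝ) * Real.log 2) + Real.log 2 by push_cast; ring,
          Real.exp_add, Real.exp_log two_pos]
        ring
      rw [e]
      have h1 := hC₀ (Real.exp (x + n * Real.log 2)) (Real.exp_pos _).le
      have h2 := hA x hx
      have hφ : 0 ≤ ω (Real.exp x) := hnonneg _ (Real.exp_pos x).le
      nlinarith [mul_le_mul_of_nonneg_left h2 hC₀pos.le, mul_nonneg hC₀pos.le hφ]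
  obtain ⟨A, hA1, hA⟩ := hdbl ⌈k / Real.log 2⌉₊
  have hlog2 : (0:ℝ) < Real.log 2 := Real.log_pos (by norm_num)
  -- shift estimate
  have hAk : ∀ x ≥ (0:ℝ), ω (Real.exp (x + k)) ≤ A * ω (Real.exp x) + A := by
    intro x hx
    refine le_trans ?_ (hA x hx)
    have hkn : k ≤ (⌈k / Real.log 2⌉₊ : ℝ) * Real.log 2 := by
      have := Nat.le_ceil (k / Real.log 2)
      calc k = (k / Real.log 2) * Real.log 2 := by field_simp
      _ ≤ (⌈k / Real.log 2⌉₊ : ℝ) * Real.log 2 :=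
        mul_le_mul_of_nonneg_right this hlog2.le
    exact hmono (Real.exp_pos _).le (Real.exp_pos _).le
      (Real.exp_le_exp.mpr (by linarith))
  obtain ⟨B, hB0, hBl⟩ := hsub l hl.le
  have hhA : (0:ℝ) < h + A := by linarith
  set m : ℝ := h / (h + A) with hm_def
  have hm : 0 < m := by positivity
  refine ⟨m, Real.exp (B + A / h), hm, Real.exp_pos _, ?_⟩
  intro y hy
  rw [Real.log_exp]
  have hbdd : BddAbove ((fun x => x * (h * y) - ω (Real.exp x)) '' Set.Ici 0) := by
    obtain ⟨B₂, hB₂0, hB₂⟩ := hsub (h * y) (by positivity)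
    refine ⟨B₂, ?_⟩
    rintro _ ⟨x, hx, rfl⟩
    simp only [Set.mem_Ici] at hx
    have := hB₂ x hx
    simp only
    linarith
  have hcoef : m + m * A / h = 1 := by
    rw [hm_def]; field_simp
  have target : YoungConj ω (m * (y + l)) ≤
      m * ((1 / h) * YoungConj ω (h * y) + (B + A / h) - k * y) := by
    unfold YoungConj
    refine csSup_le ⟨0 * (m * (y + l)) - ω (Real.exp 0), ⟨0, Set.mem_Ici.mpr le_rfl, rfl⟩⟩ ?_
    rintro _ ⟨x, hx, rfl⟩
    simp only [Set.mem_Ici] at hx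
    simp only
    have h2 : (x + k) * (h * y) - ω (Real.exp (x + k)) ≤
        sSup ((fun x => x * (h * y) - ω (Real.exp x)) '' Set.Ici 0) :=
      le_csSup hbdd ⟨x + k, Set.mem_Ici.mpr (by linarith), rfl⟩
    have h2' : (x + k) * y - ω (Real.exp (x + k)) / h ≤
        (1 / h) * sSup ((fun x => x * (h * y) - ω (Real.exp x)) '' Set.Ici 0) := by
      have h3 := mul_le_mul_of_nonneg_left h2 (by positivity : (0:ℝ) ≤ 1 / h)
      rwa [show (1/h) * ((x + k) * (h * y) - ω (Real.exp (x + k)))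
          = (x + k) * y - ω (Real.exp (x + k)) / h by field_simp] at h3
    have h4 := hAk x hx
    have h5 := hBl x hx
    have hφ : 0 ≤ ω (Real.exp x) := hnonneg _ (Real.exp_pos x).le
    have hcoef' : m * ω (Real.exp x) + m * A / h * ω (Real.exp x) = ω (Real.exp x) := by
      calc m * ω (Real.exp x) + m * A / h * ω (Real.exp x)
          = (m + m * A / h) * ω (Real.exp x) := by ring
      _ = ω (Real.exp x) := by rw [hcoef, one_mul]
    have hm2 := mul_le_mul_of_nonneg_left h2' hm.le
    have hm4 := mul_le_mul_of_nonneg_left h4 (by positivity : (0:ℝ) ≤ m / h)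
    have hm5 := mul_le_mul_of_nonneg_left h5 hm.le
    ring_nf at hm2 hm4 hm5 hcoef' ⊢
    linarith [hm2, hm4, hm5, hcoef']
  have hstep : (1 / m) * YoungConj ω (m * (y + l)) ≤
      (1 / h) * YoungConj ω (h * y) + (B + A / h) - k * y := by
    calc (1 / m) * YoungConj ω (m * (y + l))
        ≤ (1 / m) * (m * ((1 / h) * YoungConj ω (h * y) + (B + A / h) - k * y)) :=
          mul_le_mul_of_nonneg_left target (by positivity)
    _ = (1 / h) * YoungConj ω (h * y) + (B + A / h) - k * y := by
        rw [one_div, inv_mul_cancel_left₀ hm.ne']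
  linarith
end

section
/- Let M be a weight sequence with associated function ω_M(t) = sup_{p ∈ ℕ} log(t^p M_0 / M_p). For every H > 0 and every θ ∈ (0,1), ω_M(H t) ≤ θ·ω_M(t) + (1−θ)·ω_M(H^{1/(1−θ)} t) for all t ≥ 0. Consequently, the weight system {exp(ω_M(·/λ)) : λ > 0} satisfies condition (DN-tilde). -/
open Real Set Filter

/-- A weight sequence: positive, log-convex, with `M_p^{1/p} → ∞`. -/
def IsWeightSeq (M : ℕ → ℝ) : Prop :=
  (∀ p, 0 < M p) ∧
  (∀ p : ℕ, 1 ≤ p → (M p) ^ 2 ≤ M (p - 1) * M (p + 1)) ∧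
  Filter.Tendsto (fun p : ℕ => (M p) ^ ((1 : ℝ) / p)) Filter.atTop Filter.atTop

/-- The associated function `ω_M(t) = sup_p log (t^p M₀ / M_p)`. -/
noncomputable def assocFun (M : ℕ → ℝ) (t : ℝ) : ℝ :=
  ⨆ p : ℕ, Real.log (t ^ p * M 0 / M p)

/-- The quotient sequence `m_p = M_{p+1}/M_p`. -/
noncomputable def mseq (M : ℕ → ℝ) (p : ℕ) : ℝ := M (p + 1) / M p

/-- The counting function `m(x) = #{p ≥ 1 : m_p ≤ x}` of the sequence `(m_p)`. -/
noncomputable def cntFun (M : ℕ → ℝ) (x : ℝ) : ℝ :=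
  (Nat.card {p : ℕ // 1 ≤ p ∧ mseq M p ≤ x} : ℝ)

lemma logterm_expand {a t Mp M0 : ℝ} (ha : 0 < a) (ht : 0 < t) (hM0 : 0 < M0)
    (hMp : 0 < Mp) (p : ℕ) :
    Real.log ((a * t) ^ p * M0 / Mp)
      = p * (Real.log a + Real.log t) + Real.log M0 - Real.log Mp := by
  rw [Real.log_div (by positivity) hMp.ne', Real.log_mul (by positivity) hM0.ne',
    Real.log_pow, Real.log_mul ha.ne' ht.ne']

lemma bddAbove_logterms (M : ℕ → ℝ) (hM : IsWeightSeq M) (t : ℝ) (ht : 0 ≤ t) :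
    BddAbove (Set.range fun p : ℕ => Real.log (t ^ p * M 0 / M p)) := by
  obtain ⟨hpos, -, htend⟩ := hM
  rcases eq_or_lt_of_le ht with h0 | ht
  · refine ⟨0, ?_⟩
    rintro x ⟨p, rfl⟩
    rcases Nat.eq_zero_or_pos p with hp | hp
    · subst hp; simp [← h0, div_self (hpos 0).ne']
    · simp [← h0, zero_pow hp.ne']
  · obtain ⟨N, hN⟩ := Filter.eventually_atTop.mp (htend.eventually_ge_atTop (t + 1))
    refine ⟨max ((Finset.range (N+1)).sup' (by simp) fun p => Real.log (t ^ p * M 0 / M p))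
      (Real.log (M 0)), ?_⟩
    rintro x ⟨p, rfl⟩
    by_cases hp : p ≤ N
    · exact le_trans (Finset.le_sup' (fun p => Real.log (t ^ p * M 0 / M p)) (Finset.mem_range.mpr (Nat.lt_succ_of_le hp))) (le_max_left _ _)
    · push_neg at hp
      have hp0 : 0 < p := lt_of_le_of_lt (Nat.zero_le N) hp
      refine le_trans ?_ (le_max_right _ _)
      have h1 : t + 1 ≤ (M p) ^ ((1:ℝ)/p) := hN p hp.le
      have h2 : ((M p) ^ ((1:ℝ)/p)) ^ p = M p := by
        rw [← Real.rpow_natCast ((M p) ^ ((1:ℝ)/p)) p, ← Real.rpow_mul (hpos p).le,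
          one_div, inv_mul_cancel₀ (Nat.cast_ne_zero.mpr hp0.ne'), Real.rpow_one]
      have h3 : (t + 1) ^ p ≤ M p := h2 ▸ pow_le_pow_left₀ (by linarith) h1 p
      have h4 : t ^ p ≤ M p := le_trans (pow_le_pow_left₀ ht.le (by linarith) p) h3
      have h5 : t ^ p * M 0 / M p ≤ M 0 := by
        rw [div_le_iff₀ (hpos p)]
        nlinarith [pow_nonneg ht.le p, (hpos 0).le]
      exact Real.log_le_log (by have h0 := hpos 0; have hpp := hpos p; positivity) h5

lemma assocFun_zero (M : ℕ → ℝ) (hM0 : 0 < M 0) : assocFun M 0 = 0 := by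
  have h : (fun p : ℕ => Real.log ((0:ℝ) ^ p * M 0 / M p)) = fun _ => (0:ℝ) := by
    funext p
    rcases Nat.eq_zero_or_pos p with hp | hp
    · subst hp; simp [div_self hM0.ne']
    · simp [zero_pow hp.ne']
  rw [assocFun, h, ciSup_const]

lemma main_interp (M : ℕ → ℝ) (hM : IsWeightSeq M) :
    ∀ H > (0:ℝ), ∀ θ : ℝ, 0 < θ → θ < 1 → ∀ t ≥ (0:ℝ),
      assocFun M (H * t) ≤ θ * assocFun M t + (1 - θ) * assocFun M (H ^ ((1:ℝ)/(1-θ)) * t) := by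
  intro H hH θ hθ0 hθ1 t ht
  have hpos := hM.1
  have h1θ : (0:ℝ) < 1 - θ := by linarith
  rcases eq_or_lt_of_le ht with h0 | ht
  · rw [← h0, mul_zero, mul_zero, assocFun_zero M (hpos 0)]
    linarith
  · have hr : (0:ℝ) < H ^ ((1:ℝ)/(1-θ)) := Real.rpow_pos_of_pos hH _
    have hgb := bddAbove_logterms M hM t ht.le
    have hhb := bddAbove_logterms M hM (H ^ ((1:ℝ)/(1-θ)) * t) (by positivity)
    rw [assocFun]
    apply ciSup_le
    intro p
    have hf : Real.log ((H * t) ^ p * M 0 / M p)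
        = p * (Real.log H + Real.log t) + Real.log (M 0) - Real.log (M p) :=
      logterm_expand hH ht (hpos 0) (hpos p) p
    have hg : Real.log (t ^ p * M 0 / M p)
        = p * Real.log t + Real.log (M 0) - Real.log (M p) := by
      have := logterm_expand one_pos ht (hpos 0) (hpos p) p
      rwa [one_mul, Real.log_one, zero_add] at this
    have hh : Real.log ((H ^ ((1:ℝ)/(1-θ)) * t) ^ p * M 0 / M p)
        = p * ((1/(1-θ)) * Real.log H + Real.log t) + Real.log (M 0) - Real.log (M p) := by
      have := logterm_expand hr ht (hpos 0) (hpos p) p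
      rwa [Real.log_rpow hH] at this
    have key : Real.log ((H * t) ^ p * M 0 / M p)
        = θ * Real.log (t ^ p * M 0 / M p)
          + (1 - θ) * Real.log ((H ^ ((1:ℝ)/(1-θ)) * t) ^ p * M 0 / M p) := by
      rw [hf, hg, hh]; field_simp; ring
    rw [key]
    have hg' : Real.log (t ^ p * M 0 / M p) ≤ assocFun M t := le_ciSup hgb p
    have hh' : Real.log ((H ^ ((1:ℝ)/(1-θ)) * t) ^ p * M 0 / M p)
        ≤ assocFun M (H ^ ((1:ℝ)/(1-θ)) * t) := le_ciSup hhb p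
    have := mul_le_mul_of_nonneg_left hg' hθ0.le
    have := mul_le_mul_of_nonneg_left hh' h1θ.le
    linarith

/-- Convexity-type estimate for the associated function, and the resulting condition
(DN-tilde) for the weight system `V_M = {exp(ω_M(·/λ)) : λ > 0}` on `ℝ^d`. -/
theorem assocFun_interpolation_and_DNtilde (d : ℕ) (M : ℕ → ℝ) (hM : IsWeightSeq M) :
    (∀ H > (0:ℝ), ∀ θ : ℝ, 0 < θ → θ < 1 → ∀ t ≥ (0:ℝ),
      assocFun M (H * t) ≤ θ * assocFun M t + (1 - θ) * assocFun M (H ^ ((1:ℝ)/(1-θ)) * t)) ∧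
    (∃ lam > (0:ℝ), ∀ μ : ℝ, 0 < μ → μ ≤ lam → ∀ θ : ℝ, 0 < θ → θ < 1 →
      ∃ ν : ℝ, 0 < ν ∧ ν ≤ μ ∧ ∃ C > (0:ℝ), ∀ x : EuclideanSpace ℝ (Fin d),
        Real.exp (assocFun M (‖x‖ / μ)) ≤
          C * Real.exp (assocFun M (‖x‖ / lam)) ^ θ *
            Real.exp (assocFun M (‖x‖ / ν)) ^ (1 - θ)) := by
  refine ⟨main_interp M hM, 1, one_pos, ?_⟩
  intro μ hμ0 hμ1 θ hθ0 hθ1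
  have h1θ : (0:ℝ) < 1 - θ := by linarith
  have hexp : (1:ℝ) ≤ 1/(1-θ) := by
    rw [le_div_iff₀ h1θ]; linarith
  refine ⟨μ ^ ((1:ℝ)/(1-θ)), Real.rpow_pos_of_pos hμ0 _, ?_, 1, one_pos, ?_⟩
  · calc μ ^ ((1:ℝ)/(1-θ)) ≤ μ ^ (1:ℝ) :=
          Real.rpow_le_rpow_of_exponent_ge hμ0 hμ1 hexp
      _ = μ := Real.rpow_one μ
  · intro x
    have h := main_interp M hM (1/μ) (by positivity) θ hθ0 hθ1 ‖x‖ (norm_nonneg x)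
    have e1 : (1/μ) * ‖x‖ = ‖x‖ / μ := by ring
    have e2 : (1/μ) ^ ((1:ℝ)/(1-θ)) * ‖x‖ = ‖x‖ / μ ^ ((1:ℝ)/(1-θ)) := by
      rw [one_div, Real.inv_rpow hμ0.le]
      field_simp
    rw [e1, e2] at h
    have hlam : ‖x‖ / (1:ℝ) = ‖x‖ := div_one _
    rw [hlam, one_mul]
    rw [Real.rpow_def_of_pos (Real.exp_pos _), Real.rpow_def_of_pos (Real.exp_pos _),
      Real.log_exp, Real.log_exp, ← Real.exp_add, Real.exp_le_exp]
    linarith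
end

section
/- Let M be a weight sequence with m_p = M_{p+1}/M_p and counting function m(x) = #{p ≥ 1 : m_p ≤ x}. Then condition (Ω-bar-bar) for the weight system V_M, namely: for all H > 0 there exists K < H such that for all L ≤ K, ∫_{Lt}^{Kt} m(x)/x dx = o(∫_{Lt}^{Ht} m(x)/x dx) as t → ∞, is equivalent to: there exists C > 1 such that m(x) = o(m(Cx)) as x → ∞. -/
/-!
For monotone `f ≥ 0` the integral `∫_a^b f(x)/x dx` lies between `f(a) log(b/a)` and
`f(b) log(b/a)`, so both conditions compare values of `f` at points a bounded ratio apart: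
taking `H = 1`, `L = K²` in (Ω-bar-bar) gives `f(K²t) = o(f(t))`, i.e. `C = K⁻²`; conversely
`K = H/C²` makes `[Kt, CKt]` and `[CKt, Ht]` intervals of log-length `log C`. For the counting
function, monotonicity rests on `m_p → ∞`, which follows from log-convexity and `M_p^{1/p} → ∞`.
-/

open Real Set Filter

namespace IsWeightSeq

variable {M : ℕ → ℝ}

theorem mseq_pos (hM : IsWeightSeq M) (p : ℕ) : 0 < mseq M p :=
  div_pos (hM.1 (p + 1)) (hM.1 p)

theorem mseq_monotone (hM : IsWeightSeq M) : Monotone (mseq M) := by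
  obtain ⟨hpos, hlc, -⟩ := hM
  refine monotone_nat_of_le_succ fun p => ?_
  have h := hlc (p + 1) (by omega)
  rw [Nat.add_sub_cancel] at h
  rw [mseq, mseq, div_le_div_iff₀ (hpos p) (hpos (p + 1))]
  nlinarith

theorem le_mul_pow_of_mseq_le (hM : IsWeightSeq M) {B : ℝ} (hB : ∀ p, mseq M p ≤ B) (p : ℕ) :
    M p ≤ M 0 * B ^ p := by
  induction p with
  | zero => simp
  | succ n ih =>
    have hB0 : 0 ≤ B := (hM.mseq_pos 0).le.trans (hB 0)
    calc M (n + 1) = mseq M n * M n := by rw [mseq, div_mul_cancel₀ _ (hM.1 n).ne']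
      _ ≤ B * (M 0 * B ^ n) := mul_le_mul (hB n) ih (hM.1 n).le hB0
      _ = M 0 * B ^ (n + 1) := by ring

theorem rpow_one_div_le_of_mseq_le (hM : IsWeightSeq M) {B : ℝ} (hB : ∀ p, mseq M p ≤ B)
    {p : ℕ} (hp : 1 ≤ p) : M p ^ ((1 : ℝ) / p) ≤ max (M 0) 1 * B := by
  have hB0 : 0 ≤ B := (hM.mseq_pos 0).le.trans (hB 0)
  have hp0 : (p : ℝ) ≠ 0 := by positivity
  calc M p ^ ((1 : ℝ) / p) ≤ (max (M 0) 1 * B ^ p) ^ ((1 : ℝ) / p) := by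
        gcongr
        · exact (hM.1 p).le
        · exact (hM.le_mul_pow_of_mseq_le hB p).trans (by gcongr; exact le_max_left _ _)
    _ = max (M 0) 1 ^ ((1 : ℝ) / p) * B := by
        rw [mul_rpow (by positivity) (by positivity), one_div, pow_rpow_inv_natCast hB0 (by omega)]
    _ ≤ max (M 0) 1 * B := by
        gcongr
        exact rpow_le_self_of_one_le (le_max_right _ _)
          (div_le_one_of_le₀ (by exact_mod_cast hp) (by positivity))

theorem tendsto_mseq (hM : IsWeightSeq M) : Tendsto (mseq M) atTop atTop := by
  refine tendsto_atTop_atTop_of_monotone hM.mseq_monotone fun B => ?_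
  by_contra! hB
  obtain ⟨p, hp⟩ := (hM.2.2.eventually_gt_atTop (max (M 0) 1 * B)).exists_forall_of_atTop
  exact (hp (max p 1) (le_max_left _ _)).not_ge
    (hM.rpow_one_div_le_of_mseq_le (fun q => (hB q).le) (le_max_right _ _))

theorem finite_setOf_mseq_le (hM : IsWeightSeq M) (x : ℝ) : {p | mseq M p ≤ x}.Finite := by
  have h := hM.tendsto_mseq.eventually_gt_atTop x
  rw [← Nat.cofinite_eq_atTop, eventually_cofinite] at h
  simpa using h

theorem cntFun_monotone (hM : IsWeightSeq M) : Monotone (cntFun M) := fun _ y hxy =>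
  Nat.cast_le.mpr <| Nat.card_mono ((hM.finite_setOf_mseq_le y).subset fun _ hp => hp.2)
    fun _ hp => ⟨hp.1, hp.2.trans hxy⟩

end IsWeightSeq

theorem intervalIntegral_div_nonneg {f : ℝ → ℝ} {a b : ℝ} (hf0 : 0 ≤ f) (ha : 0 < a)
    (hab : a ≤ b) : 0 ≤ ∫ x in a..b, f x / x :=
  intervalIntegral.integral_nonneg hab fun x hx => div_nonneg (hf0 x) (ha.trans_le hx.1).le

namespace Monotone

variable {f : ℝ → ℝ} {a b c d δ : ℝ}

theorem intervalIntegrable_div (hf : Monotone f) (ha : 0 < a) (hab : a ≤ b) :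
    IntervalIntegrable (fun x => f x / x) MeasureTheory.volume a b := by
  simp only [div_eq_mul_inv]
  refine hf.intervalIntegrable.mul_continuousOn (continuousOn_inv₀.mono fun x hx => ?_)
  rw [uIcc_of_le hab] at hx
  exact (ha.trans_le hx.1).ne'

theorem mul_log_div_le_integral (hf : Monotone f) (ha : 0 < a) (hab : a ≤ b) :
    f a * log (b / a) ≤ ∫ x in a..b, f x / x := by
  rw [← integral_inv_of_pos ha (ha.trans_le hab), ← intervalIntegral.integral_const_mul]
  refine intervalIntegral.integral_mono_on hab ?_ (hf.intervalIntegrable_div ha hab) fun x hx => ?_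
  · simpa [div_eq_mul_inv] using (monotone_const (β := ℝ) (c := f a)).intervalIntegrable_div ha hab
  · rw [div_eq_mul_inv]
    exact mul_le_mul_of_nonneg_right (hf hx.1) (inv_nonneg.mpr (ha.trans_le hx.1).le)

theorem integral_le_mul_log_div (hf : Monotone f) (ha : 0 < a) (hab : a ≤ b) :
    ∫ x in a..b, f x / x ≤ f b * log (b / a) := by
  rw [← integral_inv_of_pos ha (ha.trans_le hab), ← intervalIntegral.integral_const_mul]
  refine intervalIntegral.integral_mono_on hab (hf.intervalIntegrable_div ha hab) ?_ fun x hx => ?_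
  · simpa [div_eq_mul_inv] using (monotone_const (β := ℝ) (c := f b)).intervalIntegrable_div ha hab
  · rw [div_eq_mul_inv]
    exact mul_le_mul_of_nonneg_right (hf hx.2) (inv_nonneg.mpr (ha.trans_le hx.1).le)

theorem integral_le_integral_of_le_left (hf : Monotone f) (hf0 : 0 ≤ f) (ha : 0 < a)
    (hab : a ≤ b) (hbc : b ≤ c) : ∫ x in b..c, f x / x ≤ ∫ x in a..c, f x / x := by
  rw [← intervalIntegral.integral_add_adjacent_intervals (hf.intervalIntegrable_div ha hab)
    (hf.intervalIntegrable_div (ha.trans_le hab) hbc)]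
  linarith [intervalIntegral_div_nonneg hf0 ha hab]

theorem mul_log_div_le_of_integral_le (hf : Monotone f) (ha : 0 < a) (hab : a ≤ b)
    (hbc : b ≤ c) (hδ : 0 ≤ δ) (h : ∫ x in a..b, f x / x ≤ δ * ∫ x in a..c, f x / x) :
    f a * log (b / a) ≤ δ * (f c * log (c / a)) :=
  (hf.mul_log_div_le_integral ha hab).trans <| h.trans <|
    mul_le_mul_of_nonneg_left (hf.integral_le_mul_log_div ha (hab.trans hbc)) hδ

theorem log_div_mul_integral_le (hf : Monotone f) (hf0 : 0 ≤ f) (ha : 0 < a) (hab : a ≤ b)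
    (hbc : b ≤ c) (hcd : c ≤ d) (hδ : 0 ≤ δ) (hfbc : f b ≤ δ * f c) :
    log (d / c) * ∫ x in a..b, f x / x ≤ δ * log (b / a) * ∫ x in a..d, f x / x := by
  have hc : 0 < c := ha.trans_le (hab.trans hbc)
  have hlog_dc : 0 ≤ log (d / c) := log_nonneg ((one_le_div hc).mpr hcd)
  have hlog_ba : 0 ≤ log (b / a) := log_nonneg ((one_le_div ha).mpr hab)
  calc log (d / c) * ∫ x in a..b, f x / x ≤ log (d / c) * (δ * f c * log (b / a)) := by
        gcongr
        exact (hf.integral_le_mul_log_div ha hab).trans (by gcongr)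
    _ = δ * log (b / a) * (f c * log (d / c)) := by ring
    _ ≤ δ * log (b / a) * ∫ x in c..d, f x / x := by
        gcongr
        exact hf.mul_log_div_le_integral hc hcd
    _ ≤ δ * log (b / a) * ∫ x in a..d, f x / x := by
        gcongr
        exact hf.integral_le_integral_of_le_left hf0 ha (hab.trans hbc) hcd

end Monotone

def IntegralOmegaBarBar (f : ℝ → ℝ) : Prop :=
  ∀ H > (0:ℝ), ∃ K : ℝ, 0 < K ∧ K < H ∧ ∀ L : ℝ, 0 < L → L ≤ K →
    ∀ ε > (0:ℝ), ∃ T : ℝ, ∀ t ≥ T,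
      (∫ x in L * t..K * t, f x / x) ≤ ε * ∫ x in L * t..H * t, f x / x

def IsLittleODilation (f : ℝ → ℝ) : Prop :=
  ∃ C > (1:ℝ), ∀ ε > (0:ℝ), ∃ X : ℝ, ∀ x ≥ X, f x ≤ ε * f (C * x)

namespace Monotone

variable {f : ℝ → ℝ}

theorem isLittleODilation_of_integralOmegaBarBar (hf : Monotone f)
    (h : IntegralOmegaBarBar f) : IsLittleODilation f := by
  obtain ⟨K, hK0, hK1, hK⟩ := h 1 one_pos
  have hK2 : K ^ 2 < K := by nlinarith
  have hlog : 0 < log (K / K ^ 2) := log_pos ((one_lt_div (by positivity)).mpr hK2)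
  refine ⟨(K ^ 2)⁻¹, one_lt_inv₀ (by positivity) |>.mpr (hK2.trans hK1), fun ε hε => ?_⟩
  obtain ⟨T, hT⟩ := hK (K ^ 2) (by positivity) hK2.le (ε / 2) (by positivity)
  have hev : ∀ᶠ t in atTop, f (K ^ 2 * t) ≤ ε * f t := by
    filter_upwards [eventually_ge_atTop T, eventually_gt_atTop 0] with t hTt ht
    have key := hf.mul_log_div_le_of_integral_le (a := K ^ 2 * t) (b := K * t) (c := 1 * t)
      (by positivity) (by gcongr) (by gcongr) (by positivity) (hT t hTt)
    have hsq : 1 / K ^ 2 = (K / K ^ 2) ^ 2 := by field_simp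
    rw [mul_div_mul_right _ _ ht.ne', mul_div_mul_right _ _ ht.ne', hsq, log_pow, one_mul] at key
    refine le_of_mul_le_mul_right ?_ hlog
    linarith
  have hC : Tendsto (fun x => (K ^ 2)⁻¹ * x) atTop atTop :=
    tendsto_id.const_mul_atTop (by positivity)
  refine eventually_atTop.1 ((hC.eventually hev).mono fun x hx => ?_)
  simpa [← mul_assoc, mul_inv_cancel₀ (pow_pos hK0 2).ne'] using hx

theorem integralOmegaBarBar_of_isLittleODilation (hf : Monotone f) (hf0 : 0 ≤ f)
    (h : IsLittleODilation f) : IntegralOmegaBarBar f := by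
  obtain ⟨C, hC1, hC⟩ := h
  have hlogC : 0 < log C := log_pos hC1
  intro H hH
  refine ⟨H / C ^ 2, by positivity, div_lt_self hH (one_lt_pow₀ hC1 two_ne_zero),
    fun L hL hLK ε hε => ?_⟩
  set K := H / C ^ 2 with hK
  have hK0 : 0 < K := by positivity
  have hCK : C * K ≤ H := by
    rw [hK, mul_div_assoc', sq, mul_div_mul_left _ _ (by positivity)]
    exact div_le_self hH.le hC1.le
  have hKH : K ≤ H := (le_mul_of_one_le_left hK0.le hC1.le).trans hCK
  have hlogKL : 0 ≤ log (K / L) := log_nonneg ((one_le_div hL).mpr hLK)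
  -- the `+ 1` keeps the denominator positive when `L = K`
  set δ := ε * log C / (log (K / L) + 1)
  have hδ : δ * log (K / L) ≤ ε * log C := by
    rw [div_mul_eq_mul_div, div_le_iff₀ (by positivity)]
    nlinarith
  obtain ⟨X, hX⟩ := hC δ (by positivity)
  have hKt : Tendsto (fun t => K * t) atTop atTop := tendsto_id.const_mul_atTop hK0
  refine eventually_atTop.1 ?_
  filter_upwards [hKt.eventually (eventually_ge_atTop X), eventually_gt_atTop 0] with t hXt ht
  have key := hf.log_div_mul_integral_le hf0 (a := L * t) (b := K * t) (c := C * (K * t))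
    (d := H * t) (by positivity) (by gcongr) (le_mul_of_one_le_left (by positivity) hC1.le)
    (by rw [← mul_assoc]; gcongr) (by positivity) (hX _ hXt)
  have hHC : H * t / (C * (K * t)) = C := by
    rw [hK]
    field_simp
  rw [hHC, mul_div_mul_right _ _ ht.ne'] at key
  refine le_of_mul_le_mul_left ?_ hlogC
  have hJ : 0 ≤ ∫ x in L * t..H * t, f x / x :=
    intervalIntegral_div_nonneg hf0 (by positivity) (by gcongr; exact hLK.trans hKH)
  calc log C * ∫ x in L * t..K * t, f x / x
      ≤ δ * log (K / L) * ∫ x in L * t..H * t, f x / x := key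
    _ ≤ ε * log C * ∫ x in L * t..H * t, f x / x := by gcongr
    _ = log C * (ε * ∫ x in L * t..H * t, f x / x) := by ring

theorem integralOmegaBarBar_iff (hf : Monotone f) (hf0 : 0 ≤ f) :
    IntegralOmegaBarBar f ↔ IsLittleODilation f :=
  ⟨hf.isLittleODilation_of_integralOmegaBarBar, hf.integralOmegaBarBar_of_isLittleODilation hf0⟩

end Monotone

/-- The integral form of condition (Ω-bar-bar) for `V_M` is equivalent to
`∃ C > 1` with `m(x) = o(m(Cx))` as `x → ∞`. -/
theorem omegabarbar_iff_counting_littleO (M : ℕ → ℝ) (hM : IsWeightSeq M) :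
    (∀ H > (0:ℝ), ∃ K : ℝ, 0 < K ∧ K < H ∧ ∀ L : ℝ, 0 < L → L ≤ K →
      ∀ ε > (0:ℝ), ∃ T : ℝ, ∀ t ≥ T,
        (∫ x in L * t..K * t, cntFun M x / x) ≤ ε * ∫ x in L * t..H * t, cntFun M x / x)
    ↔
    (∃ C > (1:ℝ), ∀ ε > (0:ℝ), ∃ X : ℝ, ∀ x ≥ X, cntFun M x ≤ ε * cntFun M (C * x)) :=
  hM.cntFun_monotone.integralOmegaBarBar_iff fun _ => Nat.cast_nonneg _
end

section
/- Let M be a weight sequence with m_p = M_{p+1}/M_p and counting function m(x) = #{p ≥ 1 : m_p ≤ x}. If there exists C > 1 with m(x) = o(m(Cx)) as x → ∞, then for every ε > 0, H > 0, setting K = H/C, and any L ≤ K, one has ∫_{Lt}^{Kt} m(x)/x dx ≤ ε ∫_{Lt}^{Ht} m(x)/x dx for all sufficiently large t. -/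
open Real Set Filter

section Aux

variable {M : ℕ → ℝ}

lemma mseq_pos (h0 : ∀ p, 0 < M p) (p : ℕ) : 0 < mseq M p :=
  div_pos (h0 _) (h0 _)

lemma mseq_mono (hM : IsWeightSeq M) : Monotone (mseq M) := by
  apply monotone_nat_of_le_succ
  intro p
  have h := hM.2.1 (p + 1) (by omega)
  simp only [Nat.add_sub_cancel] at h
  have h0 := hM.1
  rw [mseq, mseq, div_le_div_iff₀ (h0 p) (h0 (p + 1))]
  nlinarith [h0 p, h0 (p + 1), h0 (p + 2)]

lemma M_eq_prod (h0 : ∀ p, 0 < M p) (p : ℕ) :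
    M p = M 0 * ∏ i ∈ Finset.range p, mseq M i := by
  induction p with
  | zero => simp
  | succ n ih =>
    rw [Finset.prod_range_succ, ← mul_assoc, ← ih, mseq,
      mul_div_cancel₀ _ (h0 n).ne']

lemma setFinite (hM : IsWeightSeq M) (x : ℝ) :
    {p : ℕ | 1 ≤ p ∧ mseq M p ≤ x}.Finite := by
  by_contra hfin
  have hinf : {p : ℕ | 1 ≤ p ∧ mseq M p ≤ x}.Infinite := hfin
  have h0 := hM.1
  -- all quotients are ≤ x
  have hx : ∀ p, mseq M p ≤ x := by
    intro p
    obtain ⟨q, hq, hpq⟩ := hinf.exists_gt p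
    exact (mseq_mono hM hpq.le).trans hq.2
  set B : ℝ := max (M 0) 1 * max x 1 with hB
  have hB1 : (1 : ℝ) ≤ B := by
    have := le_max_right (M 0) (1:ℝ)
    have := le_max_right x (1:ℝ)
    nlinarith
  have hBpos : (0 : ℝ) < B := lt_of_lt_of_le one_pos hB1
  have hMp : ∀ p : ℕ, 1 ≤ p → M p ≤ B ^ p := by
    intro p hp
    have hprod : ∏ i ∈ Finset.range p, mseq M i ≤ (max x 1) ^ p := by
      calc ∏ i ∈ Finset.range p, mseq M i
          ≤ ∏ _i ∈ Finset.range p, max x 1 :=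
            Finset.prod_le_prod (fun i _ => (mseq_pos h0 i).le)
              (fun i _ => (hx i).trans (le_max_left _ _))
        _ = (max x 1) ^ p := by simp
    have h1 : M p ≤ max (M 0) 1 * (max x 1) ^ p := by
      rw [M_eq_prod h0 p]
      have := (le_max_left (M 0) 1)
      have hxp : (0:ℝ) ≤ (max x 1) ^ p := by positivity
      have hprodpos : 0 ≤ ∏ i ∈ Finset.range p, mseq M i :=
        Finset.prod_nonneg fun i _ => (mseq_pos h0 i).le
      nlinarith [le_max_right (M 0) (1:ℝ)]
    calc M p ≤ max (M 0) 1 * (max x 1) ^ p := h1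
      _ ≤ (max (M 0) 1) ^ p * (max x 1) ^ p := by
          have h2 : max (M 0) 1 ≤ (max (M 0) 1) ^ p :=
            le_self_pow₀ (le_max_right _ _) (by omega)
          have : (0:ℝ) ≤ (max x 1) ^ p := by positivity
          nlinarith
      _ = B ^ p := by rw [hB, mul_pow]
  -- hence M p ^ (1/p) ≤ B for p ≥ 1, contradicting tendsto atTop
  have hev : ∀ᶠ p : ℕ in atTop, B < M p ^ ((1:ℝ) / p) :=
    hM.2.2.eventually_gt_atTop B
  obtain ⟨p, hp1, hpB⟩ := (hev.and (eventually_ge_atTop 1)).exists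
  have : M p ^ ((1:ℝ) / p) ≤ B := by
    have hple : M p ^ ((1:ℝ)/p) ≤ (B ^ p) ^ ((1:ℝ)/p) :=
      Real.rpow_le_rpow (h0 p).le (hMp p hpB) (by positivity)
    have : ((B : ℝ) ^ p) ^ ((1:ℝ)/p) = B := by
      rw [← Real.rpow_natCast B p, ← Real.rpow_mul hBpos.le]
      rw [mul_one_div, div_self (Nat.cast_ne_zero.mpr (by omega) : (p:ℝ) ≠ 0), Real.rpow_one]
    linarith [hple, this ▸ hple]
  exact absurd this (not_le.mpr hp1)

lemma cnt_nonneg (x : ℝ) : 0 ≤ cntFun M x := Nat.cast_nonneg _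

lemma cnt_mono (hM : IsWeightSeq M) : Monotone (cntFun M) := by
  intro x y hxy
  unfold cntFun
  have h : Nat.card {p : ℕ | 1 ≤ p ∧ mseq M p ≤ x} ≤
      Nat.card {p : ℕ | 1 ≤ p ∧ mseq M p ≤ y} :=
    Nat.card_mono (setFinite hM y) (fun p hp => ⟨hp.1, hp.2.trans hxy⟩)
  exact_mod_cast h

lemma g_intInt (hM : IsWeightSeq M) {c a b : ℝ} (hc : 0 < c) (ha : 0 < a) (hb : 0 < b) :
    IntervalIntegrable (fun x => cntFun M (c * x) / x) MeasureTheory.volume a b := by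
  have h1 : IntervalIntegrable (fun x => cntFun M (c * x)) MeasureTheory.volume a b := by
    apply Monotone.intervalIntegrable
    exact (cnt_mono hM).comp (fun u v huv => by nlinarith)
  have h2 : ContinuousOn (fun x : ℝ => x⁻¹) (Set.uIcc a b) := by
    apply ContinuousOn.inv₀ continuousOn_id
    intro x hx
    have : min a b ≤ x := hx.1
    have : 0 < x := lt_of_lt_of_le (lt_min ha hb) hx.1
    exact this.ne'
  simpa only [div_eq_mul_inv] using h1.mul_continuousOn h2

end Aux

/-- If `m(x) = o(m(Cx))` for some `C > 1`, then for every `ε, H > 0`, `K = H/C` and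
`0 < L ≤ K`, one has `∫_{Lt}^{Kt} m(x)/x dx ≤ ε ∫_{Lt}^{Ht} m(x)/x dx` for large `t`. -/
theorem counting_littleO_implies_integral_estimate (M : ℕ → ℝ) (hM : IsWeightSeq M)
    (C : ℝ) (hC : 1 < C)
    (ho : ∀ ε > (0:ℝ), ∃ X : ℝ, ∀ x ≥ X, cntFun M x ≤ ε * cntFun M (C * x)) :
    ∀ ε > (0:ℝ), ∀ H > (0:ℝ), ∀ L : ℝ, 0 < L → L ≤ H / C →
      ∃ T : ℝ, ∀ t ≥ T,
        (∫ x in L * t..(H / C) * t, cntFun M x / x) ≤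
          ε * ∫ x in L * t..H * t, cntFun M x / x := by
  intro ε hε H hH L hL hLK
  obtain ⟨X, hX⟩ := ho ε hε
  have hC0 : (0:ℝ) < C := lt_trans one_pos hC
  set K : ℝ := H / C with hKdef
  have hK0 : 0 < K := div_pos hH hC0
  have hKH : K ≤ H := by
    rw [hKdef, div_le_iff₀ hC0]; nlinarith
  refine ⟨max (X / L) 1, fun t ht => ?_⟩
  have ht1 : (1:ℝ) ≤ t := le_trans (le_max_right _ _) ht
  have ht0 : (0:ℝ) < t := lt_of_lt_of_le one_pos ht1
  have haX : X ≤ L * t := by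
    have h := le_trans (le_max_left _ _) ht
    rw [div_le_iff₀ hL] at h
    nlinarith
  have ha0 : 0 < L * t := mul_pos hL ht0
  have hKt0 : 0 < K * t := mul_pos hK0 ht0
  have hHt0 : 0 < H * t := mul_pos hH ht0
  have hab : L * t ≤ K * t := by nlinarith
  have hCKH : C * (K * t) = H * t := by
    rw [hKdef]; field_simp
  -- step 1: pointwise bound and integral monotonicity
  have hint1 : IntervalIntegrable (fun x => cntFun M x / x) MeasureTheory.volume
      (L * t) (K * t) := by
    simpa using g_intInt hM one_pos ha0 hKt0
  have hint2 : IntervalIntegrable (fun x => ε * (cntFun M (C * x) / x)) MeasureTheory.volume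
      (L * t) (K * t) := (g_intInt hM hC0 ha0 hKt0).const_mul ε
  have step1 : (∫ x in L * t..K * t, cntFun M x / x) ≤
      ∫ x in L * t..K * t, ε * (cntFun M (C * x) / x) := by
    apply intervalIntegral.integral_mono_on hab hint1 hint2
    intro x hx
    have hx0 : 0 < x := lt_of_lt_of_le ha0 hx.1
    have hXx : X ≤ x := le_trans haX hx.1
    have := hX x hXx
    rw [← mul_div_assoc]
    gcongr
  -- step 2: pull out ε and substitute
  have step2 : (∫ x in L * t..K * t, ε * (cntFun M (C * x) / x)) =
      ε * ∫ x in L * t..K * t, cntFun M (C * x) / x :=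
    intervalIntegral.integral_const_mul _ _
  have step3 : (∫ x in L * t..K * t, cntFun M (C * x) / x) =
      ∫ x in C * (L * t)..H * t, cntFun M x / x := by
    have hcong : (∫ x in L * t..K * t, cntFun M (C * x) / x) =
        ∫ x in L * t..K * t, C * ((fun u => cntFun M u / u) (C * x)) := by
      apply intervalIntegral.integral_congr
      intro x hx
      have hx0 : 0 < x := lt_of_lt_of_le (lt_min ha0 hKt0) hx.1
      field_simp
    rw [hcong, intervalIntegral.integral_const_mul,
      intervalIntegral.integral_comp_mul_left (fun u => cntFun M u / u) hC0.ne',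
      hCKH, smul_eq_mul, ← mul_assoc, mul_inv_cancel₀ hC0.ne', one_mul]
  -- step 4: extend the integration range
  have hCa : L * t ≤ C * (L * t) := by nlinarith
  have hCaH : C * (L * t) ≤ H * t := by
    have : C * (L * t) ≤ C * (K * t) := by nlinarith
    linarith [hCKH ▸ this]
  have hnn : (0:ℝ) ≤ ∫ x in L * t..C * (L * t), cntFun M x / x := by
    apply intervalIntegral.integral_nonneg hCa
    intro x hx
    have hx0 : 0 < x := lt_of_lt_of_le ha0 hx.1
    exact div_nonneg (cnt_nonneg x) hx0.le
  have hsplit : (∫ x in L * t..H * t, cntFun M x / x) =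
      (∫ x in L * t..C * (L * t), cntFun M x / x) +
        ∫ x in C * (L * t)..H * t, cntFun M x / x := by
    rw [intervalIntegral.integral_add_adjacent_intervals]
    · simpa using g_intInt hM one_pos ha0 (lt_of_lt_of_le ha0 hCa)
    · simpa using g_intInt hM one_pos (lt_of_lt_of_le ha0 hCa) hHt0
  have step4 : (∫ x in C * (L * t)..H * t, cntFun M x / x) ≤
      ∫ x in L * t..H * t, cntFun M x / x := by
    rw [hsplit]; linarith
  calc (∫ x in L * t..K * t, cntFun M x / x)
      ≤ ∫ x in L * t..K * t, ε * (cntFun M (C * x) / x) := step1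
    _ = ε * ∫ x in C * (L * t)..H * t, cntFun M x / x := by rw [step2, step3]
    _ ≤ ε * ∫ x in L * t..H * t, cntFun M x / x :=
        mul_le_mul_of_nonneg_left step4 hε.le
end

section
/- Let M be a weight sequence satisfying condition (Ω-seq): there is C > 0 such that for all N ∈ ℤ₊ there is p₀ with m_{Np} ≤ C·m_p for all p ≥ p₀. Then the counting function m of (m_p) satisfies: there exists C' > 1 with m(x) = o(m(C'x)) as x → ∞. -/
open Real Set Filter

/-- A finite downward-closed (within `{p ≥ 1}`) set of naturals not containing `0`
is an interval `Icc 1 n` with `n` its cardinality. -/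
lemma icc_of_downclosed (T : Set ℕ) (hfin : T.Finite) (h0 : 0 ∉ T)
    (hdc : ∀ p ∈ T, ∀ q, 1 ≤ q → q ≤ p → q ∈ T) : T = Set.Icc 1 (Nat.card T) := by
  have hex : ∃ n, T = Set.Icc 1 n := by
    rcases T.eq_empty_or_nonempty with he | hne
    · exact ⟨0, by simp [he]⟩
    · have hne' : hfin.toFinset.Nonempty := by
        simpa [Set.Finite.toFinset_nonempty] using hne
      refine ⟨hfin.toFinset.max' hne', ?_⟩
      ext p
      constructor
      · intro hp
        refine ⟨?_, Finset.le_max' _ p (by simpa using hp)⟩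
        rcases Nat.eq_zero_or_pos p with h | h
        · exact absurd (h ▸ hp) h0
        · exact h
      · intro hp
        have hmax : hfin.toFinset.max' hne' ∈ T := by
          have := hfin.toFinset.max'_mem hne'
          simpa using this
        exact hdc _ hmax p hp.1 hp.2
  obtain ⟨n, hn⟩ := hex
  have hcard : Nat.card T = n := by
    rw [hn, Nat.card_coe_set_eq, ← Finset.coe_Icc, Set.ncard_coe_finset, Nat.card_Icc]
    omega
  rw [hcard, hn]

/-- If `M` satisfies (Ω-seq), then the counting function `m` satisfies
`m(x) = o(m(C'x))` for some `C' > 1`. -/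
theorem omegaSeq_implies_counting_littleO (M : ℕ → ℝ) (hM : IsWeightSeq M)
    (h : ∃ C > (0:ℝ), ∀ N : ℕ, 1 ≤ N → ∃ p₀ : ℕ, 1 ≤ p₀ ∧
      ∀ p ≥ p₀, mseq M (N * p) ≤ C * mseq M p) :
    ∃ C' > (1:ℝ), ∀ ε > (0:ℝ), ∃ X : ℝ, ∀ x ≥ X, cntFun M x ≤ ε * cntFun M (C' * x) := by
  obtain ⟨hpos, hconv, htend⟩ := hM
  obtain ⟨C, hC, hΩ⟩ := h
  have hmpos : ∀ p, 0 < mseq M p := fun p => div_pos (hpos _) (hpos _)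
  have hmono : Monotone (mseq M) := by
    apply monotone_nat_of_le_succ
    intro p
    have h1 := hconv (p + 1) (by omega)
    simp only [Nat.add_sub_cancel] at h1
    unfold mseq
    rw [div_le_div_iff₀ (hpos p) (hpos (p + 1))]
    nlinarith [hpos p, hpos (p + 1), hpos (p + 2)]
  have hunbdd : ∀ x : ℝ, ∃ q, x < mseq M q := by
    intro x
    by_contra hcon
    push_neg at hcon
    set y := max x 1 with hy
    have hy1 : (1 : ℝ) ≤ y := le_max_right _ _
    have hb : ∀ p, M p ≤ M 0 * y ^ p := by
      intro p; induction p with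
      | zero => simp
      | succ p ih =>
        have hMe : M (p + 1) = mseq M p * M p := by
          unfold mseq; rw [div_mul_cancel₀ _ (hpos p).ne']
        rw [hMe, pow_succ]
        have h2 : mseq M p ≤ y := le_trans (hcon p) (le_max_left _ _)
        calc mseq M p * M p ≤ y * (M 0 * y ^ p) :=
              mul_le_mul h2 ih (hpos p).le (by linarith)
          _ = M 0 * (y ^ p * y) := by ring
    have hB : ∀ p : ℕ, 1 ≤ p → M p ^ ((1:ℝ)/p) ≤ max (M 0) 1 * y := by
      intro p hp
      have hp0 : (p : ℝ) ≠ 0 := by positivity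
      have hy0 : (0:ℝ) ≤ y := by linarith
      have step1 : M p ^ ((1:ℝ)/p) ≤ (M 0 * y ^ p) ^ ((1:ℝ)/p) :=
        Real.rpow_le_rpow (hpos p).le (hb p) (by positivity)
      have step2 : (M 0 * y ^ p) ^ ((1:ℝ)/p) = M 0 ^ ((1:ℝ)/p) * y := by
        rw [Real.mul_rpow (hpos 0).le (by positivity), ← Real.rpow_natCast y p,
          ← Real.rpow_mul hy0]
        congr 1
        rw [mul_one_div, div_self hp0, Real.rpow_one]
      have step3 : M 0 ^ ((1:ℝ)/p) ≤ max (M 0) 1 := by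
        rcases le_total (M 0) 1 with h1 | h1
        · exact le_trans (Real.rpow_le_one (hpos 0).le h1 (by positivity)) (le_max_right _ _)
        · have := Real.rpow_le_rpow_of_exponent_le h1
            (show (1:ℝ)/p ≤ 1 by
              rw [div_le_one (by exact_mod_cast hp)]
              exact_mod_cast hp)
          rw [Real.rpow_one] at this
          exact le_trans this (le_max_left _ _)
      calc M p ^ ((1:ℝ)/p) ≤ M 0 ^ ((1:ℝ)/p) * y := by rw [← step2]; exact step1
        _ ≤ max (M 0) 1 * y := mul_le_mul_of_nonneg_right step3 hy0
    have hev := (htend.eventually_gt_atTop (max (M 0) 1 * y)).and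
      (Filter.eventually_ge_atTop 1)
    obtain ⟨p, hgt, hp1⟩ := hev.exists
    exact absurd (hB p hp1) (not_le.mpr hgt)
  have hfinS : ∀ x : ℝ, {p : ℕ | 1 ≤ p ∧ mseq M p ≤ x}.Finite := by
    intro x
    obtain ⟨q, hq⟩ := hunbdd x
    apply Set.Finite.subset (Set.finite_Icc 1 q)
    rintro p ⟨hp1, hpx⟩
    refine ⟨hp1, ?_⟩
    by_contra hgt
    push_neg at hgt
    exact absurd (le_trans (hmono hgt.le) hpx) (not_le.mpr hq)
  refine ⟨C + 1, by linarith, ?_⟩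
  intro ε hε
  obtain ⟨N₀, hN₀⟩ := exists_nat_ge (1/ε)
  set N := max N₀ 1 with hN
  have hN1 : 1 ≤ N := le_max_right _ _
  have hNε : 1 ≤ ε * N := by
    have hle : (1:ℝ)/ε ≤ N :=
      le_trans hN₀ (by exact_mod_cast le_max_left N₀ 1)
    calc (1:ℝ) = ε * (1/ε) := by field_simp
      _ ≤ ε * N := mul_le_mul_of_nonneg_left hle hε.le
  obtain ⟨p₀, hp₀1, hΩ'⟩ := hΩ N hN1
  refine ⟨mseq M p₀, ?_⟩
  intro x hx
  set S := {p : ℕ | 1 ≤ p ∧ mseq M p ≤ x} with hSdef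
  set k := Nat.card S with hk
  have hxpos : 0 < x := lt_of_lt_of_le (hmpos p₀) hx
  have hp₀S : p₀ ∈ S := ⟨hp₀1, hx⟩
  have hSIcc : S = Set.Icc 1 k := by
    apply icc_of_downclosed S (hfinS x)
    · rintro ⟨h0, -⟩; omega
    · rintro p ⟨-, hp2⟩ q hq1 hqp
      exact ⟨hq1, le_trans (hmono hqp) hp2⟩
  have hp₀k : p₀ ≤ k := (hSIcc ▸ hp₀S).2
  have hkS : k ∈ S := hSIcc ▸ Set.mem_Icc.mpr ⟨le_trans hp₀1 hp₀k, le_refl k⟩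
  have hmk : mseq M k ≤ x := hkS.2
  have hNkx : mseq M (N * k) ≤ (C + 1) * x := by
    calc mseq M (N * k) ≤ C * mseq M k := hΩ' k hp₀k
      _ ≤ C * x := mul_le_mul_of_nonneg_left hmk hC.le
      _ ≤ (C + 1) * x := by nlinarith
  have hsub : Set.Icc 1 (N * k) ⊆ {p : ℕ | 1 ≤ p ∧ mseq M p ≤ (C + 1) * x} := by
    rintro p ⟨hp1, hp2⟩
    exact ⟨hp1, le_trans (hmono hp2) hNkx⟩
  have hcard : (N * k : ℕ) ≤ Nat.card {p : ℕ | 1 ≤ p ∧ mseq M p ≤ (C + 1) * x} := by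
    have h1 : Nat.card (Set.Icc 1 (N * k)) = N * k := by
      rw [Nat.card_coe_set_eq, ← Finset.coe_Icc, Set.ncard_coe_finset, Nat.card_Icc]
      omega
    rw [← h1, Nat.card_coe_set_eq, Nat.card_coe_set_eq]
    exact Set.ncard_le_ncard hsub (hfinS _)
  have hcnt1 : cntFun M x = (k : ℝ) := by
    unfold cntFun
    norm_cast
  have hcnt2 : ((N * k : ℕ) : ℝ) ≤ cntFun M ((C + 1) * x) := by
    unfold cntFun
    exact_mod_cast hcard
  rw [hcnt1]
  calc (k : ℝ) = 1 * k := (one_mul _).symm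
    _ ≤ (ε * N) * k := mul_le_mul_of_nonneg_right hNε (by positivity)
    _ = ε * ((N * k : ℕ) : ℝ) := by push_cast; ring
    _ ≤ ε * cntFun M ((C + 1) * x) := mul_le_mul_of_nonneg_left hcnt2 hε.le
end

section
/- The weight sequences M_p = (log(p+e))^{sp}, s > 0, satisfy: there is C > 0 such that for every N ∈ ℤ₊ there is p₀ with m_{Np} ≤ C·m_p for all p ≥ p₀, where m_p = M_{p+1}/M_p. -/
open Real Set Filter

/-- The weight sequence `M_p = (log(p+e))^{sp}` for `s > 0`. -/
noncomputable def logSeq (s : ℝ) (p : ℕ) : ℝ :=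
  (Real.log ((p : ℝ) + Real.exp 1)) ^ (s * p)

/-! Write `ℓ(x) = log (log (x + e))`, so that `log M_p = s p ℓ(p)` and
`log m_p = s ℓ(p + 1) + s p (ℓ(p + 1) - ℓ(p))`. Since `ℓ` grows so slowly that
`(x + 1)(ℓ(x + 1) - ℓ(x)) ≤ 1`, the second term lies in `[0, s]`, hence
`log m_p = s ℓ(p + 1) + O(s)`. For `p ≥ N` we have `N p + 1 ≤ (p + 1)²`, and squaring the
argument moves `ℓ` by at most `log 2`; so `m_{Np} ≤ e^{2s} m_p`. -/

lemma one_le_log_add_exp_one {x : ℝ} (hx : 0 ≤ x) : 1 ≤ log (x + exp 1) := by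
  rw [le_log_iff_exp_le (by positivity)]
  linarith

lemma log_sub_log_le_div {x y : ℝ} (hx : 0 < x) (hy : 0 < y) :
    log y - log x ≤ (y - x) / x := by
  rw [← log_div hy.ne' hx.ne', sub_div, div_self hx.ne']
  exact log_le_sub_one_of_pos (div_pos hy hx)

lemma log_log_add_exp_one_mono {x y : ℝ} (hx : 0 ≤ x) (hxy : x ≤ y) :
    log (log (x + exp 1)) ≤ log (log (y + exp 1)) :=
  log_le_log (zero_lt_one.trans_le (one_le_log_add_exp_one hx))
    (log_le_log (by positivity) (by linarith))

lemma mul_log_log_add_exp_one_succ_sub_le {x : ℝ} (hx : 0 ≤ x) :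
    (x + 1) * (log (log (x + 1 + exp 1)) - log (log (x + exp 1))) ≤ 1 := by
  have hL := one_le_log_add_exp_one hx
  have hLmono : log (x + exp 1) ≤ log (x + 1 + exp 1) :=
    log_le_log (by positivity) (by linarith)
  have hxe : 0 < x + exp 1 := by positivity
  calc (x + 1) * (log (log (x + 1 + exp 1)) - log (log (x + exp 1)))
      ≤ (x + 1) * (log (x + 1 + exp 1) - log (x + exp 1)) := by
        refine mul_le_mul_of_nonneg_left ?_ (by linarith)
        calc _ ≤ (log (x + 1 + exp 1) - log (x + exp 1)) / log (x + exp 1) :=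
              log_sub_log_le_div (by linarith) (by linarith)
          _ ≤ log (x + 1 + exp 1) - log (x + exp 1) := div_le_self (by linarith) hL
    _ ≤ (x + 1) * ((x + 1 + exp 1 - (x + exp 1)) / (x + exp 1)) := by
        gcongr
        exact log_sub_log_le_div hxe (by positivity)
    _ ≤ 1 := by
        rw [add_sub_add_right_eq_sub, add_sub_cancel_left, mul_one_div, div_le_one hxe]
        linarith [add_one_le_exp 1]

lemma log_log_add_exp_one_le_of_le_sq {x y : ℝ} (hx : 0 ≤ x) (hy : 0 ≤ y) (hxy : x ≤ y ^ 2) :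
    log (log (x + exp 1)) ≤ log 2 + log (log (y + exp 1)) := by
  have hLy := one_le_log_add_exp_one hy
  have he : 1 ≤ exp 1 := by linarith [add_one_le_exp 1]
  have hsq : x + exp 1 ≤ (y + exp 1) ^ 2 := by nlinarith
  calc log (log (x + exp 1)) ≤ log (log ((y + exp 1) ^ 2)) :=
        log_le_log (zero_lt_one.trans_le (one_le_log_add_exp_one hx))
          (log_le_log (by positivity) hsq)
    _ = log 2 + log (log (y + exp 1)) := by
        rw [log_pow, Nat.cast_ofNat, log_mul two_ne_zero (by positivity)]

lemma logSeq_pos (s : ℝ) (p : ℕ) : 0 < logSeq s p :=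
  rpow_pos_of_pos (zero_lt_one.trans_le (one_le_log_add_exp_one p.cast_nonneg)) _

lemma mseq_logSeq_pos (s : ℝ) (p : ℕ) : 0 < mseq (logSeq s) p :=
  div_pos (logSeq_pos s _) (logSeq_pos s _)

lemma log_logSeq (s : ℝ) (p : ℕ) : log (logSeq s p) = s * p * log (log (p + exp 1)) :=
  log_rpow (zero_lt_one.trans_le (one_le_log_add_exp_one p.cast_nonneg)) _

lemma log_mseq_logSeq (s : ℝ) (p : ℕ) :
    log (mseq (logSeq s) p) = s * log (log (p + 1 + exp 1)) +
      s * (p * (log (log (p + 1 + exp 1)) - log (log (p + exp 1)))) := by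
  rw [mseq, log_div (logSeq_pos s _).ne' (logSeq_pos s _).ne', log_logSeq, log_logSeq]
  push_cast
  ring

section

variable {s : ℝ} (hs : 0 ≤ s)
include hs

lemma mul_log_log_le_log_mseq_logSeq (p : ℕ) :
    s * log (log (p + 1 + exp 1)) ≤ log (mseq (logSeq s) p) := by
  rw [log_mseq_logSeq]
  have hmono := log_log_add_exp_one_mono p.cast_nonneg (le_add_of_nonneg_right zero_le_one)
  have := mul_nonneg hs (mul_nonneg p.cast_nonneg (sub_nonneg.2 hmono))
  linarith

lemma log_mseq_logSeq_le (p : ℕ) :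
    log (mseq (logSeq s) p) ≤ s * log (log (p + 1 + exp 1)) + s := by
  rw [log_mseq_logSeq]
  have hmono := log_log_add_exp_one_mono p.cast_nonneg (le_add_of_nonneg_right zero_le_one)
  have hdiff : (p : ℝ) * (log (log (p + 1 + exp 1)) - log (log (p + exp 1))) ≤ 1 :=
    (mul_le_mul_of_nonneg_right (by linarith) (sub_nonneg.2 hmono)).trans
      (mul_log_log_add_exp_one_succ_sub_le p.cast_nonneg)
  linarith [mul_le_mul_of_nonneg_left hdiff hs]

lemma mseq_logSeq_mul_le {N p : ℕ} (hNp : N ≤ p) :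
    mseq (logSeq s) (N * p) ≤ exp (2 * s) * mseq (logSeq s) p := by
  have hsq : ((N * p : ℕ) : ℝ) + 1 ≤ ((p : ℝ) + 1) ^ 2 := by
    have : (N : ℝ) ≤ p := by exact_mod_cast hNp
    push_cast
    nlinarith
  have hℓ := log_log_add_exp_one_le_of_le_sq (by positivity) (by positivity) hsq
  have hlog2 : log 2 ≤ 1 := by linarith [log_two_lt_d9]
  rw [← log_le_log_iff (mseq_logSeq_pos s _) (mul_pos (exp_pos _) (mseq_logSeq_pos s p)),
    log_mul (exp_pos _).ne' (mseq_logSeq_pos s p).ne', log_exp]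
  calc log (mseq (logSeq s) (N * p))
      ≤ s * log (log ((N * p : ℕ) + 1 + exp 1)) + s := log_mseq_logSeq_le hs _
    _ ≤ s * (log 2 + log (log (p + 1 + exp 1))) + s := by gcongr
    _ ≤ 2 * s + s * log (log (p + 1 + exp 1)) := by
        linarith [mul_le_mul_of_nonneg_left hlog2 hs]
    _ ≤ 2 * s + log (mseq (logSeq s) p) := by
        gcongr
        exact mul_log_log_le_log_mseq_logSeq hs p

end

/-- The sequences `M_p = (log(p+e))^{sp}`, `s > 0`, satisfy condition (Ω-seq):
there is `C > 0` such that for every `N ∈ ℤ₊` there is `p₀` with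
`m_{Np} ≤ C m_p` for all `p ≥ p₀`. -/
theorem logSeq_satisfies_omegaSeq (s : ℝ) (hs : 0 < s) :
    ∃ C > (0:ℝ), ∀ N : ℕ, 1 ≤ N → ∃ p₀ : ℕ, 1 ≤ p₀ ∧
      ∀ p ≥ p₀, mseq (logSeq s) (N * p) ≤ C * mseq (logSeq s) p := by
  refine ⟨exp (2 * s), exp_pos _, fun N _ => ⟨max N 1, le_max_right _ _, fun p hp => ?_⟩⟩
  exact mseq_logSeq_mul_le hs.le ((le_max_left _ _).trans hp)
end

section
/- Let X be a topological space, ω a weight function, and V = {v_λ} a weight system on X. If the weight grid A_{(V_ω, V)} = {a_{N,n}} on ℝ^d × X with a_{N,n}(t,x) = e^{Nω(t)}/v_{1/n}(x) satisfies condition (wQ), then V satisfies (DN-tilde). -/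
open Real Set Filter
set_option maxHeartbeats 800000

/-- A weight system `{v_λ : λ > 0}` on `X`: continuous, `≥ 1`, decreasing in `λ`. -/
def IsWeightSystem {X : Type*} [TopologicalSpace X] (v : ℝ → X → ℝ) : Prop :=
  (∀ lam : ℝ, 0 < lam → Continuous (v lam)) ∧
  (∀ lam : ℝ, 0 < lam → ∀ x, 1 ≤ v lam x) ∧
  (∀ μ lam : ℝ, 0 < μ → μ ≤ lam → ∀ x, v lam x ≤ v μ x)

lemma exists_omega_eq (ω : ℝ → ℝ)
    (hmono : MonotoneOn ω (Set.Ici 0)) (hcont : ContinuousOn ω (Set.Ici 0))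
    (h0 : ω 0 = 0) (hlog : ∀ ε > (0:ℝ), ∃ T > (0:ℝ), ∀ t ≥ T, Real.log t ≤ ε * ω t)
    (s : ℝ) (hs : 0 ≤ s) : ∃ r : ℝ, 0 ≤ r ∧ ω r = s := by
  obtain ⟨T, hT, hl⟩ := hlog 1 one_pos
  set t0 := max T (Real.exp s) with ht0def
  have ht0T : T ≤ t0 := le_max_left _ _
  have ht0pos : 0 < t0 := lt_of_lt_of_le hT ht0T
  have hωt0 : s ≤ ω t0 := by
    have h1 := hl t0 ht0T
    have h2 : s ≤ Real.log t0 := by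
      rw [← Real.log_exp s]
      exact Real.log_le_log (Real.exp_pos s) (le_max_right _ _)
    linarith
  have hsub : Set.Icc (0:ℝ) t0 ⊆ Set.Ici 0 := fun y hy => hy.1
  have hIVT := intermediate_value_Icc (le_of_lt ht0pos) (hcont.mono hsub)
  have hmem : s ∈ Set.Icc (ω 0) (ω t0) := by rw [h0]; exact ⟨hs, hωt0⟩
  obtain ⟨r, hr, hωr⟩ := hIVT hmem
  exact ⟨r, hr.1, hωr⟩


/-- If the weight grid `A_{(V_ω, V)}` on `ℝ^d × X` (`d ≥ 1`), with
`a_{N,n}(t,x) = e^{Nω(t)}/v_{1/n}(x)`, satisfies condition (wQ),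
then `V` satisfies (DN-tilde). -/
theorem wQ_implies_DNtilde (d : ℕ) (hd : 0 < d) (X : Type*) [TopologicalSpace X]
    (ω : ℝ → ℝ) (hω : IsWeightFunction ω)
    (v : ℝ → X → ℝ) (hv : IsWeightSystem v)
    (hwQ : ∀ N : ℕ, ∃ M : ℕ, N ≤ M ∧ ∃ n : ℕ, 1 ≤ n ∧ ∀ K : ℕ, M ≤ K → ∀ m : ℕ, n ≤ m →
      ∃ ε > (0:ℝ), ∃ k : ℕ, m ≤ k ∧ ∃ C > (0:ℝ),
        ∀ (t : EuclideanSpace ℝ (Fin d)) (x : X),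
          v (1 / (m:ℝ)) x * Real.exp (-(M:ℝ) * ω ‖t‖) ≤
            ε * (v (1 / (n:ℝ)) x * Real.exp (-(N:ℝ) * ω ‖t‖)) +
              C * (v (1 / (k:ℝ)) x * Real.exp (-(K:ℝ) * ω ‖t‖))) :
    ∃ lam > (0:ℝ), ∀ μ : ℝ, 0 < μ → μ ≤ lam → ∀ θ : ℝ, 0 < θ → θ < 1 →
      ∃ ν : ℝ, 0 < ν ∧ ν ≤ μ ∧ ∃ C > (0:ℝ), ∀ x : X,
        v μ x ≤ C * (v lam x) ^ θ * (v ν x) ^ (1 - θ) := by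
  obtain ⟨M, _, n, hn1, h⟩ := hwQ 0
  have hnpos : (0:ℝ) < n := by exact_mod_cast hn1
  refine ⟨1 / (n:ℝ), by positivity, ?_⟩
  intro μ hμ hμlam θ hθ0 hθ1
  -- choose m with n ≤ m and 1/m ≤ μ
  set m : ℕ := max n ⌈1/μ⌉₊ with hmdef
  have hnm : n ≤ m := le_max_left _ _
  have hmpos : (0:ℝ) < m := lt_of_lt_of_le hnpos (by exact_mod_cast hnm)
  have h1mμ : 1 / (m:ℝ) ≤ μ := by
    have h1 : 1/μ ≤ (m:ℝ) := le_trans (Nat.le_ceil _) (by exact_mod_cast le_max_right n ⌈1/μ⌉₊)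
    rw [div_le_iff₀ hmpos]
    rw [div_le_iff₀ hμ] at h1
    nlinarith
  -- choose K with M ≤ K and (M:ℝ) ≤ (1-θ)*K
  set L : ℕ := ⌈θ * M / (1-θ)⌉₊ + 1 with hLdef
  set K : ℕ := M + L with hKdef
  have hMK : M ≤ K := Nat.le_add_right _ _
  have hKpos : (0:ℝ) < K := by
    have : 0 < K := by omega
    exact_mod_cast this
  have h1θ : (0:ℝ) < 1 - θ := by linarith
  have hMθK : (M:ℝ) ≤ (1 - θ) * K := by
    have hL : θ * M / (1-θ) ≤ (L:ℝ) := le_trans (Nat.le_ceil _)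
      (by exact_mod_cast Nat.le_succ _)
    rw [div_le_iff₀ h1θ] at hL
    have : (K:ℝ) = (M:ℝ) + (L:ℝ) := by exact_mod_cast rfl
    nlinarith
  obtain ⟨ε, hε, k, hmk, C, hC, hineq⟩ := h K hMK m hnm
  have hkpos : (0:ℝ) < k := lt_of_lt_of_le hmpos (by exact_mod_cast hmk)
  have hνμ : 1 / (k:ℝ) ≤ μ := le_trans (by
    apply one_div_le_one_div_of_le hmpos
    exact_mod_cast hmk) h1mμ
  refine ⟨1 / (k:ℝ), by positivity, hνμ, ε + C, by positivity, ?_⟩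
  intro x
  set A := v (1 / (n:ℝ)) x with hAdef
  set B := v (1 / (k:ℝ)) x with hBdef
  have hA1 : 1 ≤ A := hv.2.1 _ (by positivity) x
  have hB1 : 1 ≤ B := hv.2.1 _ (by positivity) x
  have hApos : 0 < A := lt_of_lt_of_le one_pos hA1
  have hBpos : 0 < B := lt_of_lt_of_le one_pos hB1
  have hAB : A ≤ B := by
    have hkn : 1 / (k:ℝ) ≤ 1 / (n:ℝ) := by
      apply one_div_le_one_div_of_le hnpos
      exact_mod_cast le_trans hnm hmk
    exact hv.2.2 _ _ (by positivity) hkn x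
  set a := Real.log A with hadef
  set b := Real.log B with hbdef
  have ha0 : 0 ≤ a := Real.log_nonneg hA1
  have hab : a ≤ b := Real.log_le_log hApos hAB
  set s := (b - a) / K with hsdef
  have hs0 : 0 ≤ s := div_nonneg (by linarith) (le_of_lt hKpos)
  obtain ⟨r, hr0, hωr⟩ := exists_omega_eq ω hω.1 hω.2.1 hω.2.2.1 hω.2.2.2.2.2.1 s hs0
  set t : EuclideanSpace ℝ (Fin d) := EuclideanSpace.single (⟨0, hd⟩ : Fin d) r with htdef
  have hnt : ‖t‖ = r := by
    rw [htdef, EuclideanSpace.norm_single, Real.norm_eq_abs, abs_of_nonneg hr0]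
  have key := hineq t x
  rw [hnt, hωr] at key
  have hKs : (K:ℝ) * s = b - a := by
    rw [hsdef]; field_simp
  have hexpA : Real.exp a = A := Real.exp_log hApos
  have hexpB : Real.exp b = B := Real.exp_log hBpos
  -- simplify key
  have key2 : v (1 / (m:ℝ)) x * Real.exp (-(M:ℝ) * s) ≤ (ε + C) * A := by
    have e1 : Real.exp (-((0:ℕ):ℝ) * s) = 1 := by norm_num
    have e2 : B * Real.exp (-(K:ℝ) * s) = A := by
      rw [← hexpB, ← Real.exp_add]
      have : b + -(K:ℝ) * s = a := by rw [neg_mul, hKs]; ring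
      rw [this, hexpA]
    rw [e1] at key
    calc v (1 / (m:ℝ)) x * Real.exp (-(M:ℝ) * s)
        ≤ ε * (A * 1) + C * (B * Real.exp (-(K:ℝ) * s)) := key
      _ = (ε + C) * A := by rw [e2]; ring
  have hvμm : v μ x ≤ v (1 / (m:ℝ)) x := hv.2.2 _ _ (by positivity) h1mμ x
  have hexppos : (0:ℝ) < Real.exp (-(M:ℝ) * s) := Real.exp_pos _
  have key3 : v μ x ≤ (ε + C) * A * Real.exp ((M:ℝ) * s) := by
    have h1 : v μ x * Real.exp (-(M:ℝ) * s) ≤ (ε + C) * A :=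
      le_trans (by nlinarith) key2
    have h2 := mul_le_mul_of_nonneg_right h1 (le_of_lt (Real.exp_pos ((M:ℝ) * s)))
    calc v μ x = v μ x * (Real.exp (-(M:ℝ) * s) * Real.exp ((M:ℝ) * s)) := by
          rw [← Real.exp_add]; simp
      _ = v μ x * Real.exp (-(M:ℝ) * s) * Real.exp ((M:ℝ) * s) := by ring
      _ ≤ (ε + C) * A * Real.exp ((M:ℝ) * s) := h2
  -- final exponent comparison
  have hMs : (M:ℝ) * s ≤ (1 - θ) * (b - a) := by
    rw [hsdef, ← mul_div_assoc, div_le_iff₀ hKpos]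
    nlinarith
  have hrpow : (ε + C) * A ^ θ * B ^ (1 - θ) = (ε + C) * Real.exp (a * θ + b * (1 - θ)) := by
    rw [Real.rpow_def_of_pos hApos, Real.rpow_def_of_pos hBpos, ← hadef, ← hbdef,
      Real.exp_add]; ring
  rw [hrpow]
  calc v μ x ≤ (ε + C) * A * Real.exp ((M:ℝ) * s) := key3
    _ = (ε + C) * Real.exp (a + (M:ℝ) * s) := by rw [Real.exp_add, hexpA]; ring
    _ ≤ (ε + C) * Real.exp (a * θ + b * (1 - θ)) := by
        apply mul_le_mul_of_nonneg_left _ (by positivity)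
        apply Real.exp_le_exp.mpr
        nlinarith
end

section
/- Let X be a topological space, ω a weight function, V = {v_λ} a weight system on X satisfying (DN-tilde). Then the weight grid A_{(V_ω, V)} on ℝ^d × X given by a_{N,n}(t,x) = e^{Nω(t)}/v_{1/n}(x) satisfies condition (Q): ∀N ∃M ≥ N ∃n ∀K ≥ M ∀m ≥ n ∀ε > 0 ∃k ≥ m ∃C > 0 such that v_{1/m}(x)/e^{Mω(t)} ≤ ε·v_{1/n}(x)/e^{Nω(t)} + C·v_{1/k}(x)/e^{Kω(t)} for all (t,x). -/
/-!
Pick `n` with `1/n ≤ λ` from (DN-tilde) and `M = N + 1`. For `K > M` choose `θ ∈ (0,1)` with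
`θ N + (1 - θ) K = N + 1`; then (DN-tilde) bounds `v_{1/m}(x) e^{-(N+1)ω(t)}` by
`C₀ a^θ b^{1-θ}` with `a = v_{1/n}(x) e^{-Nω(t)}` and `b = v_{1/k}(x) e^{-Kω(t)}`, and rescaling
`a` by `ε` and `b` by a suitable `C` turns this geometric mean into `ε a + C b`.
-/

open Real Set Filter

def HasDNTilde {X : Type*} (v : ℝ → X → ℝ) : Prop :=
  ∃ lam > (0:ℝ), ∀ μ : ℝ, 0 < μ → μ ≤ lam → ∀ θ : ℝ, 0 < θ → θ < 1 →
    ∃ ν : ℝ, 0 < ν ∧ ν ≤ μ ∧ ∃ C > (0:ℝ), ∀ x : X,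
      v μ x ≤ C * (v lam x) ^ θ * (v ν x) ^ (1 - θ)

lemma rpow_mul_rpow_one_sub_le_add {a b θ : ℝ} (ha : 0 ≤ a) (hb : 0 ≤ b) (hθ0 : 0 ≤ θ)
    (hθ1 : θ ≤ 1) : a ^ θ * b ^ (1 - θ) ≤ a + b :=
  calc a ^ θ * b ^ (1 - θ) ≤ θ * a + (1 - θ) * b :=
        geom_mean_le_arith_mean2_weighted hθ0 (by linarith) ha hb (by ring)
    _ ≤ a + b := by nlinarith

lemma exists_mul_rpow_mul_rpow_le {θ C₀ ε : ℝ} (hθ0 : 0 ≤ θ) (hθ1 : θ < 1) (hC₀ : 0 < C₀)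
    (hε : 0 < ε) : ∃ C > (0:ℝ), ∀ a b : ℝ, 0 ≤ a → 0 ≤ b →
      C₀ * a ^ θ * b ^ (1 - θ) ≤ ε * a + C * b := by
  have hθ1' : 0 < 1 - θ := by linarith
  set C := (C₀ / ε ^ θ) ^ (1 / (1 - θ))
  have hC : C ^ (1 - θ) = C₀ / ε ^ θ := by
    rw [← rpow_mul (by positivity), one_div_mul_cancel hθ1'.ne', rpow_one]
  refine ⟨C, by positivity, fun a b ha hb => ?_⟩
  calc C₀ * a ^ θ * b ^ (1 - θ) = (ε * a) ^ θ * (C * b) ^ (1 - θ) := by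
        rw [mul_rpow hε.le ha, mul_rpow (by positivity) hb, hC]
        field_simp
    _ ≤ ε * a + C * b :=
        rpow_mul_rpow_one_sub_le_add (by positivity) (by positivity) hθ0 hθ1.le

lemma div_exp_le_of_le_mul_rpow_mul_rpow {u a b θ p q r w C₀ : ℝ} (ha : 0 ≤ a) (hb : 0 ≤ b)
    (hr : θ * p + (1 - θ) * q = r) (hu : u ≤ C₀ * a ^ θ * b ^ (1 - θ)) :
    u / exp (r * w) ≤ C₀ * (a / exp (p * w)) ^ θ * (b / exp (q * w)) ^ (1 - θ) := by
  have hexp : exp (p * w) ^ θ * exp (q * w) ^ (1 - θ) = exp (r * w) := by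
    rw [← exp_mul, ← exp_mul, ← exp_add, ← hr]
    ring_nf
  rw [div_rpow ha (exp_pos _).le, div_rpow hb (exp_pos _).le, mul_assoc, div_mul_div_comm,
    hexp, ← mul_div_assoc, ← mul_assoc]
  exact div_le_div_of_nonneg_right hu (exp_pos _).le

lemma exists_mul_add_one_sub_mul_eq {p q r : ℝ} (hpr : p < r) (hrq : r < q) :
    ∃ θ : ℝ, 0 < θ ∧ θ < 1 ∧ θ * p + (1 - θ) * q = r := by
  have hpq : q - p ≠ 0 := by linarith
  refine ⟨(q - r) / (q - p), div_pos (by linarith) (by linarith),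
    (div_lt_one (by linarith)).2 (by linarith), ?_⟩
  field_simp
  ring

lemma exists_nat_le_one_div_le {lam : ℝ} (hlam : 0 < lam) (m : ℕ) :
    ∃ k : ℕ, m ≤ k ∧ 1 / (k:ℝ) ≤ lam := by
  obtain ⟨n, hn⟩ := exists_nat_one_div_lt hlam
  refine ⟨max m (n + 1), le_max_left _ _, ?_⟩
  calc 1 / ((max m (n + 1) : ℕ) : ℝ) ≤ 1 / ((n:ℝ) + 1) := by
        gcongr
        exact_mod_cast le_max_right m (n + 1)
    _ ≤ lam := hn.le

namespace IsWeightSystem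

variable {X : Type*} [TopologicalSpace X] {v : ℝ → X → ℝ}

lemma pos (hv : IsWeightSystem v) {lam : ℝ} (hlam : 0 < lam) (x : X) : 0 < v lam x :=
  one_pos.trans_le (hv.2.1 lam hlam x)

lemma hasDNTilde_nat (hv : IsWeightSystem v) (hDN : HasDNTilde v) :
    ∃ n : ℕ, 1 ≤ n ∧ ∀ m : ℕ, n ≤ m → ∀ θ : ℝ, 0 < θ → θ < 1 →
      ∃ k : ℕ, m ≤ k ∧ ∃ C > (0:ℝ), ∀ x : X,
        v (1 / (m:ℝ)) x ≤ C * v (1 / (n:ℝ)) x ^ θ * v (1 / (k:ℝ)) x ^ (1 - θ) := by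
  obtain ⟨lam, hlam, hDN⟩ := hDN
  obtain ⟨n, hn1, hnlam⟩ := exists_nat_le_one_div_le hlam 1
  refine ⟨n, hn1, fun m hm θ hθ0 hθ1 => ?_⟩
  have hn : (0:ℝ) < 1 / (n:ℝ) := one_div_pos.2 (by exact_mod_cast hn1)
  have hmn : 1 / (m:ℝ) ≤ 1 / (n:ℝ) := one_div_le_one_div_of_le (by exact_mod_cast hn1)
    (by exact_mod_cast hm)
  have hm0 : (0:ℝ) < 1 / (m:ℝ) := one_div_pos.2 (by exact_mod_cast hn1.trans hm)
  obtain ⟨ν, hν, -, C, hC, hineq⟩ := hDN (1 / (m:ℝ)) hm0 (hmn.trans hnlam) θ hθ0 hθ1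
  obtain ⟨k, hmk, hkν⟩ := exists_nat_le_one_div_le hν m
  have hk : (0:ℝ) < 1 / (k:ℝ) := one_div_pos.2 (by exact_mod_cast (hn1.trans hm).trans hmk)
  refine ⟨k, hmk, C, hC, fun x => (hineq x).trans ?_⟩
  have hlamx := (hv.pos hlam x).le
  have hνx := (hv.pos hν x).le
  gcongr
  · exact mul_nonneg hC.le (rpow_nonneg (hv.pos hn x).le _)
  · exact hv.2.2 _ _ hn hnlam x
  · exact hv.2.2 _ _ hk hkν x

end IsWeightSystem

theorem DNtilde_implies_Q_general (d : ℕ) (X : Type*) [TopologicalSpace X]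
    (ω : ℝ → ℝ)
    (v : ℝ → X → ℝ) (hv : IsWeightSystem v)
    (hDN : ∃ lam > (0:ℝ), ∀ μ : ℝ, 0 < μ → μ ≤ lam → ∀ θ : ℝ, 0 < θ → θ < 1 →
      ∃ ν : ℝ, 0 < ν ∧ ν ≤ μ ∧ ∃ C > (0:ℝ), ∀ x : X,
        v μ x ≤ C * (v lam x) ^ θ * (v ν x) ^ (1 - θ)) :
    ∀ N : ℕ, ∃ M : ℕ, N ≤ M ∧ ∃ n : ℕ, 1 ≤ n ∧ ∀ K : ℕ, M ≤ K → ∀ m : ℕ, n ≤ m →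
      ∀ ε > (0:ℝ), ∃ k : ℕ, m ≤ k ∧ ∃ C > (0:ℝ),
        ∀ (t : EuclideanSpace ℝ (Fin d)) (x : X),
          v (1 / (m:ℝ)) x / Real.exp ((M:ℝ) * ω ‖t‖) ≤
            ε * (v (1 / (n:ℝ)) x / Real.exp ((N:ℝ) * ω ‖t‖)) +
              C * (v (1 / (k:ℝ)) x / Real.exp ((K:ℝ) * ω ‖t‖)) := by
  intro N
  obtain ⟨n, hn1, hDNn⟩ := hv.hasDNTilde_nat hDN
  refine ⟨N + 1, N.le_succ, n, hn1, fun K hK m hm ε hε => ?_⟩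
  have hpos (j : ℕ) (hj : n ≤ j) (x : X) : 0 < v (1 / (j:ℝ)) x :=
    hv.pos (one_div_pos.2 (by exact_mod_cast hn1.trans hj)) x
  rcases hK.eq_or_lt with rfl | hK
  · refine ⟨m, le_rfl, 1, one_pos, fun t x => ?_⟩
    rw [one_mul]
    exact le_add_of_nonneg_left (by have := hpos n le_rfl x; positivity)
  obtain ⟨θ, hθ0, hθ1, hθ⟩ : ∃ θ : ℝ, 0 < θ ∧ θ < 1 ∧ θ * N + (1 - θ) * K = ((N + 1 : ℕ) : ℝ) :=
    exists_mul_add_one_sub_mul_eq (by push_cast; linarith) (by exact_mod_cast hK)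
  obtain ⟨k, hmk, C₀, hC₀, hdn⟩ := hDNn m hm θ hθ0 hθ1
  obtain ⟨C, hC, hsplit⟩ := exists_mul_rpow_mul_rpow_le hθ0.le hθ1 hC₀ hε
  refine ⟨k, hmk, C, hC, fun t x => ?_⟩
  have hvn := hpos n le_rfl x
  have hvk := hpos k (hm.trans hmk) x
  exact (div_exp_le_of_le_mul_rpow_mul_rpow hvn.le hvk.le hθ (hdn x)).trans
    (hsplit _ _ (by positivity) (by positivity))

/-- If `V` satisfies (DN-tilde), then the weight grid `A_{(V_ω, V)}` on `ℝ^d × X`,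
`a_{N,n}(t,x) = e^{Nω(t)}/v_{1/n}(x)`, satisfies condition (Q). -/
theorem DNtilde_implies_Q (d : ℕ) (X : Type*) [TopologicalSpace X]
    (ω : ℝ → ℝ) (hω : IsWeightFunction ω)
    (v : ℝ → X → ℝ) (hv : IsWeightSystem v)
    (hDN : ∃ lam > (0:ℝ), ∀ μ : ℝ, 0 < μ → μ ≤ lam → ∀ θ : ℝ, 0 < θ → θ < 1 →
      ∃ ν : ℝ, 0 < ν ∧ ν ≤ μ ∧ ∃ C > (0:ℝ), ∀ x : X,
        v μ x ≤ C * (v lam x) ^ θ * (v ν x) ^ (1 - θ)) :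
    ∀ N : ℕ, ∃ M : ℕ, N ≤ M ∧ ∃ n : ℕ, 1 ≤ n ∧ ∀ K : ℕ, M ≤ K → ∀ m : ℕ, n ≤ m →
      ∀ ε > (0:ℝ), ∃ k : ℕ, m ≤ k ∧ ∃ C > (0:ℝ),
        ∀ (t : EuclideanSpace ℝ (Fin d)) (x : X),
          v (1 / (m:ℝ)) x / Real.exp ((M:ℝ) * ω ‖t‖) ≤
            ε * (v (1 / (n:ℝ)) x / Real.exp ((N:ℝ) * ω ‖t‖)) +
              C * (v (1 / (k:ℝ)) x / Real.exp ((K:ℝ) * ω ‖t‖)) :=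
  DNtilde_implies_Q_general d X ω v hv hDN
end
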